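/- For the last-touch attribution rule, the user × publisher × advertiser adjacency relation with post-attribution contribution bound enforcement is invalid: for any integer p > 1 there exist adjacent datasets D and D' (differing by all impressions of one (user, publisher, advertiser) triple), with contribution bound r = 1, such that ‖attr(D) - attr(D')‖₁ ≥ p - 1. -/

import Mathlib

/-! Framework for differentially private ad conversion measurement
(Delaney et al., "Differentially Private Ad Conversion Measurement"). -/

structure Impression where
  time : ℕ
  user : ℕ
  pub : ℕ
  adv : ℕ
  id : ℕ
deriving DecidableEq

structure Conversion where
  time : ℕ
  user : ℕ
  adv : ℕ
  id : ℕ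
deriving DecidableEq

structure Dataset where
  imps : List Impression
  convs : List Conversion

/-- An attribution rule maps a time-ordered list of impressions and a conversion
to a list of credits (one per impression). -/
abbrev AttrRule := List Impression → Conversion → List ℝ

/-- A valid attribution rule outputs one nonnegative weight per impression, summing to 1. -/
def ValidRule (a : AttrRule) : Prop :=
  ∀ is c, is ≠ [] →
    (a is c).length = is.length ∧ (a is c).sum = 1 ∧ ∀ w ∈ a is c, (0 : ℝ) ≤ w

/-- Impressions eligible for attribution of conversion `c`: those occurring earlier
with the same user and advertiser. -/
def eligible (D : Dataset) (c : Conversion) : List Impression :=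
  D.imps.filter fun i => decide (i.time < c.time ∧ i.user = c.user ∧ i.adv = c.adv)

/-- ℓ₁ distance between attributed datasets. -/
noncomputable def l1dist (w w' : (Impression × Conversion) →₀ ℝ) : ℝ :=
  (w - w').sum fun _ v => |v|

/-- Impressions and conversions are listed in time order. -/
def SortedDS (D : Dataset) : Prop :=
  D.imps.Pairwise (fun i j => i.time ≤ j.time) ∧
  D.convs.Pairwise (fun c c' => c.time ≤ c'.time)

/-- Inner loop of post-attribution contribution-bound enforcement: each weighted
(impression, conversion) pair is kept only if the remaining bound of its scope covers
the weight, in which case the weight is deducted. -/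
noncomputable def applyPairs {σ : Type} [DecidableEq σ] (s : Impression → σ) (c : Conversion) :
    List (Impression × ℝ) → (σ → ℝ) × ((Impression × Conversion) →₀ ℝ) →
      (σ → ℝ) × ((Impression × Conversion) →₀ ℝ)
  | [], st => st
  | (i, w) :: rest, st =>
      if w ≤ st.1 (s i) then
        applyPairs s c rest
          (Function.update st.1 (s i) (st.1 (s i) - w), st.2 + Finsupp.single (i, c) w)
      else
        applyPairs s c rest st

/-- Attribution with post-attribution contribution bound enforcement (Algorithm 1),
with contribution bounding scope map `s` and contribution bound `r`. -/
noncomputable def postAttr {σ : Type} [DecidableEq σ] (a : AttrRule) (s : Impression → σ)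
    (r : ℝ) (D : Dataset) : (Impression × Conversion) →₀ ℝ :=
  (D.convs.foldl
    (fun st c => applyPairs s c ((eligible D c).zip (a (eligible D c) c)) st)
    ((fun _ => r : σ → ℝ), (0 : (Impression × Conversion) →₀ ℝ))).2

/-- Attribution with pre-attribution contribution bound enforcement (Algorithm 2):
for each conversion, every scope with an eligible impression pays one unit of its bound
if available, otherwise its impressions are excluded from attribution. -/
noncomputable def preAttr {σ : Type} [DecidableEq σ] (a : AttrRule) (s : Impression → σ)
    (r : ℝ) (D : Dataset) : (Impression × Conversion) →₀ ℝ :=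
  (D.convs.foldl
    (fun (st : (σ → ℝ) × ((Impression × Conversion) →₀ ℝ)) c =>
      let el := eligible D c
      let surv := el.filter fun i => decide ((1 : ℝ) ≤ st.1 (s i))
      let scopes := (el.map s).dedup
      ((fun x => if x ∈ scopes ∧ (1 : ℝ) ≤ st.1 x then st.1 x - 1 else st.1 x : σ → ℝ),
        st.2 + ((surv.zip (a surv c)).map fun p => Finsupp.single (p.1, c) p.2).sum))
    ((fun _ => r : σ → ℝ), (0 : (Impression × Conversion) →₀ ℝ))).2

/-- Attribution without any contribution bound enforcement. -/
noncomputable def attrNoCap (a : AttrRule) (D : Dataset) :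
    (Impression × Conversion) →₀ ℝ :=
  (D.convs.map fun c =>
    (((eligible D c).zip (a (eligible D c) c)).map fun p => Finsupp.single (p.1, c) p.2).sum).sum

/-- Adjacency: `D'` results from `D` by adding a single impression (in time order). -/
def AddOneImpression (D D' : Dataset) : Prop :=
  ∃ (i0 : Impression) (l₁ l₂ : List Impression),
    D.imps = l₁ ++ l₂ ∧ D'.imps = l₁ ++ i0 :: l₂ ∧ D.convs = D'.convs

/-- Adjacency: `D` results from `D'` by removing all impressions whose scope (under `si`)
is `v` and all conversions whose scope (under `sc`) is `v`. -/
def RemovesScope {σ : Type} [DecidableEq σ] (si : Impression → σ)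
    (sc : Conversion → Option σ) (v : σ) (D D' : Dataset) : Prop :=
  D.imps = D'.imps.filter (fun i => decide (si i ≠ v)) ∧
  D.convs = D'.convs.filter (fun c => decide (sc c ≠ some v))

/-- First-touch attribution. -/
noncomputable def FTA : AttrRule := fun is _ =>
  match is with
  | [] => []
  | _ :: t => 1 :: t.map fun _ => 0

/-- Last-touch attribution. -/
noncomputable def LTA : AttrRule := fun is _ =>
  match is with
  | [] => []
  | _ :: _ => List.replicate (is.length - 1) 0 ++ [1]

/-- Uniform multi-touch attribution. -/
noncomputable def UNI : AttrRule := fun is _ => is.map fun _ => ((is.length : ℝ))⁻¹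

/-- U-shaped attribution. -/
noncomputable def USH : AttrRule := fun is _ =>
  match is with
  | [] => []
  | [_] => [1]
  | [_, _] => [0.5, 0.5]
  | _ :: _ :: _ :: _ =>
      (0.4 : ℝ) :: (List.replicate (is.length - 2) ((0.2 : ℝ) / ((is.length : ℝ) - 2)) ++ [0.4])

/-- Exponential time decay attribution with half-life `th`. -/
noncomputable def EXPR (th : ℝ) : AttrRule := fun is c =>
  let wt : Impression → ℝ := fun i => (2 : ℝ) ^ (-(((c.time : ℝ) - (i.time : ℝ)) / th))
  is.map fun i => wt i / (is.map wt).sum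

/-!
Under last-touch attribution a conversion credits only its latest eligible impression, so
post-attribution enforcement with bound `1` keeps a conversion exactly when the scope of that
impression has not been charged yet. In the full dataset every conversion's last touch lies on
the shared publisher, whose budget the first conversion exhausts; removing that publisher moves
the last touch of the `k`-th conversion to publisher `k + 1`, with a fresh budget, so all
`p - 1` credits appear.
-/

theorem List.filter_map_range_of_iff_lt {α : Type*} (f : ℕ → α) (P : α → Bool) {m n : ℕ}
    (hmn : m ≤ n) (hP : ∀ j < n, P (f j) ↔ j < m) :
    ((List.range n).map f).filter P = (List.range m).map f := by
  obtain ⟨d, rfl⟩ := Nat.exists_eq_add_of_le hmn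
  rw [List.range_add, List.map_append, List.filter_append, List.filter_eq_self.2,
    List.filter_eq_nil_iff.2, List.append_nil]
  · simp only [List.map_map, List.mem_map, List.mem_range, Function.comp_apply]
    rintro _ ⟨j, hj, rfl⟩
    simpa using (hP (m + j) (by omega)).not.2 (by omega)
  · simp only [List.mem_map, List.mem_range]
    rintro _ ⟨j, hj, rfl⟩
    exact (hP j (by omega)).2 hj

section PostAttrLTA

variable {σ : Type} [DecidableEq σ] (s : Impression → σ)

theorem applyPairs_append (c : Conversion) (l₁ l₂ : List (Impression × ℝ))
    (st : (σ → ℝ) × ((Impression × Conversion) →₀ ℝ)) :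
    applyPairs s c (l₁ ++ l₂) st = applyPairs s c l₂ (applyPairs s c l₁ st) := by
  induction l₁ generalizing st with
  | nil => rfl
  | cons iw l₁ ih =>
    obtain ⟨i, w⟩ := iw
    simp only [List.cons_append, applyPairs]
    split <;> apply ih

theorem applyPairs_of_forall_snd_eq_zero (c : Conversion) (l : List (Impression × ℝ))
    (hl : ∀ iw ∈ l, iw.2 = 0) (st : (σ → ℝ) × ((Impression × Conversion) →₀ ℝ)) :
    applyPairs s c l st = st := by
  induction l generalizing st with
  | nil => rfl
  | cons iw l ih =>
    obtain ⟨i, w⟩ := iw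
    obtain rfl : w = 0 := hl (i, w) List.mem_cons_self
    have hl' := fun iw hiw => hl iw (List.mem_cons_of_mem _ hiw)
    simp only [applyPairs, sub_zero, Function.update_eq_self, Finsupp.single_zero, add_zero]
    split <;> exact ih hl' st

theorem applyPairs_singleton (c : Conversion) (i : Impression) (w : ℝ)
    (st : (σ → ℝ) × ((Impression × Conversion) →₀ ℝ)) :
    applyPairs s c [(i, w)] st =
      if w ≤ st.1 (s i) then
        (Function.update st.1 (s i) (st.1 (s i) - w), st.2 + Finsupp.single (i, c) w)
      else st := by
  simp only [applyPairs]

theorem LTA_concat (l : List Impression) (i : Impression) (c : Conversion) :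
    LTA (l ++ [i]) c = List.replicate l.length 0 ++ [1] := by
  cases l <;> simp [LTA]

theorem applyPairs_zip_LTA_concat (c : Conversion) (l : List Impression) (i : Impression)
    (st : (σ → ℝ) × ((Impression × Conversion) →₀ ℝ)) :
    applyPairs s c ((l ++ [i]).zip (LTA (l ++ [i]) c)) st = applyPairs s c [(i, 1)] st := by
  rw [LTA_concat, List.zip_append (by simp), applyPairs_append,
    applyPairs_of_forall_snd_eq_zero s c _
      fun _ h => List.eq_of_mem_replicate (List.of_mem_zip h).2]
  rfl

variable (last : Conversion → Impression)

def IsLastTouch (D : Dataset) : Prop :=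
  ∀ c ∈ D.convs, ∃ l, eligible D c = l ++ [last c]

theorem postAttr_LTA_eq_foldl (r : ℝ) (D : Dataset)
    (hlast : IsLastTouch last D) :
    postAttr LTA s r D =
      (D.convs.foldl (fun st c => applyPairs s c [(last c, 1)] st)
        ((fun _ => r : σ → ℝ), (0 : (Impression × Conversion) →₀ ℝ))).2 := by
  rw [postAttr]
  congr 1
  refine List.foldl_ext _ _ _ fun st c hc => ?_
  obtain ⟨l, hl⟩ := hlast c hc
  rw [hl, applyPairs_zip_LTA_concat]

theorem foldl_applyPairs_of_nodup (L : List Conversion) (b : σ → ℝ)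
    (w : (Impression × Conversion) →₀ ℝ) (hb : ∀ c ∈ L, 1 ≤ b (s (last c)))
    (hL : (L.map (s ∘ last)).Nodup) :
    (L.foldl (fun st c => applyPairs s c [(last c, 1)] st) (b, w)).2 =
      w + (L.map fun c => Finsupp.single (last c, c) 1).sum := by
  induction L generalizing b w with
  | nil => simp
  | cons c L ih =>
    rw [List.map_cons, List.nodup_cons] at hL
    rw [List.foldl_cons, applyPairs_singleton, if_pos (hb c List.mem_cons_self), ih _ _ _ hL.2,
      List.map_cons, List.sum_cons, add_assoc]
    intro c' hc'
    have hne : s (last c') ≠ s (last c) := fun h => hL.1 (List.mem_map.2 ⟨c', hc', h⟩)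
    rw [Function.update_of_ne hne]
    exact hb c' (List.mem_cons_of_mem _ hc')

theorem foldl_applyPairs_of_lt_one (L : List Conversion)
    (st : (σ → ℝ) × ((Impression × Conversion) →₀ ℝ))
    (hst : ∀ c ∈ L, st.1 (s (last c)) < 1) :
    L.foldl (fun st c => applyPairs s c [(last c, 1)] st) st = st := by
  induction L with
  | nil => rfl
  | cons c L ih =>
    rw [List.foldl_cons, applyPairs_singleton, if_neg (hst c List.mem_cons_self).not_ge]
    exact ih fun c' hc' => hst c' (List.mem_cons_of_mem _ hc')

theorem postAttr_LTA_of_nodup {r : ℝ} (hr : 1 ≤ r) {D : Dataset}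
    (hlast : IsLastTouch last D)
    (hD : (D.convs.map (s ∘ last)).Nodup) :
    postAttr LTA s r D = (D.convs.map fun c => Finsupp.single (last c, c) 1).sum := by
  rw [postAttr_LTA_eq_foldl s last r D hlast,
    foldl_applyPairs_of_nodup s last _ _ _ (fun _ _ => hr) hD, zero_add]

theorem postAttr_LTA_of_scope_eq {r : ℝ} (hr₁ : 1 ≤ r) (hr₂ : r < 2) {D : Dataset}
    (hlast : IsLastTouch last D)
    {c₀ : Conversion} {L : List Conversion} (hD : D.convs = c₀ :: L)
    (hL : ∀ c ∈ L, s (last c) = s (last c₀)) :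
    postAttr LTA s r D = Finsupp.single (last c₀, c₀) 1 := by
  rw [postAttr_LTA_eq_foldl s last r D hlast, hD, List.foldl_cons, applyPairs_singleton,
    if_pos hr₁, foldl_applyPairs_of_lt_one, zero_add]
  intro c hc
  dsimp only
  rw [hL c hc, Function.update_self]
  linarith

end PostAttrLTA

theorem sum_abs_le_l1dist (w w' : (Impression × Conversion) →₀ ℝ)
    (S : Finset (Impression × Conversion)) : ∑ x ∈ S, |(w - w') x| ≤ l1dist w w' := by
  rw [l1dist, Finsupp.sum_of_support_subset _ Finset.subset_union_right _ (fun _ _ => abs_zero)]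
  exact Finset.sum_le_sum_of_subset_of_nonneg Finset.subset_union_left fun _ _ _ => abs_nonneg _

theorem length_le_l1dist_sum_single {L : List Conversion} (hL : L.Nodup)
    (f : Conversion → Impression) {x₀ : Impression × Conversion}
    (hx₀ : ∀ c ∈ L, (f c, c) ≠ x₀) :
    (L.length : ℝ) ≤
      l1dist (L.map fun c => Finsupp.single (f c, c) 1).sum (Finsupp.single x₀ 1) := by
  set w := (L.map fun c => Finsupp.single (f c, c) (1 : ℝ)).sum with hw_def
  set w' := Finsupp.single x₀ (1 : ℝ)
  have hw : ∀ c ∈ L.toFinset, |(w - w') (f c, c)| = 1 := by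
    intro c hc
    have hwc : w (f c, c) = 1 := by
      rw [hw_def, ← List.sum_toFinset _ hL, Finsupp.finsetSum_apply, Finset.sum_eq_single c]
      · simp
      · intro c' _ hc'
        exact Finsupp.single_eq_of_ne (by simp [Ne.symm hc'])
      · exact fun h => absurd hc h
    rw [Finsupp.sub_apply, hwc, Finsupp.single_eq_of_ne (hx₀ c (List.mem_toFinset.1 hc))]
    simp
  calc (L.length : ℝ) = ∑ c ∈ L.toFinset, |(w - w') (f c, c)| := by
        rw [Finset.sum_congr rfl hw, Finset.sum_const, List.toFinset_card_of_nodup hL]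
        simp
    _ = ∑ x ∈ L.toFinset.image (fun c => (f c, c)), |(w - w') x| := by
        rw [Finset.sum_image fun _ _ _ _ h => congrArg Prod.snd h]
    _ ≤ _ := sum_abs_le_l1dist _ _ _

namespace LTAPostAttrUPA

def upa (i : Impression) : ℕ × ℕ × ℕ := (i.user, i.pub, i.adv)

/-- Impression `2k` is on publisher `k + 1`, impression `2k + 1` on the shared publisher `0`. -/
def imp (m : ℕ) : Impression := ⟨2 * m, 0, if m % 2 = 0 then m / 2 + 1 else 0, 0, m⟩

/-- Conversion `k` falls between impressions `2k + 1` and `2k + 2`. -/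
def conv (k : ℕ) : Conversion := ⟨4 * k + 3, 0, 0, k⟩

def fullDS (n : ℕ) : Dataset := ⟨(List.range (2 * n)).map imp, (List.range n).map conv⟩

def prunedDS (n : ℕ) : Dataset :=
  ⟨(fullDS n).imps.filter fun i => decide (upa i ≠ (0, 0, 0)), (fullDS n).convs⟩

theorem removesScope_prunedDS (n : ℕ) :
    RemovesScope upa (fun _ => none) (0, 0, 0) (prunedDS n) (fullDS n) :=
  ⟨rfl, by simp [prunedDS]⟩

theorem sortedDS_fullDS (n : ℕ) : SortedDS (fullDS n) := by
  refine ⟨?_, ?_⟩ <;>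
  · simp only [fullDS, List.pairwise_map]
    exact List.pairwise_lt_range.imp fun h => by simp only [imp, conv]; omega

theorem eligible_fullDS {n k : ℕ} (hk : k < n) :
    eligible (fullDS n) (conv k) = (List.range (2 * k + 2)).map imp :=
  List.filter_map_range_of_iff_lt _ _ (by omega) fun j _ => by simp [imp, conv]; omega

theorem eligible_prunedDS {n k : ℕ} (hk : k < n) :
    eligible (prunedDS n) (conv k) =
      ((List.range (2 * k)).map imp).filter (fun i => decide (upa i ≠ (0, 0, 0))) ++
        [imp (2 * k)] := by
  have hcomm : eligible (prunedDS n) (conv k) =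
      (eligible (fullDS n) (conv k)).filter fun i => decide (upa i ≠ (0, 0, 0)) := by
    simp only [eligible, prunedDS, List.filter_filter, Bool.and_comm]
  rw [hcomm, eligible_fullDS hk, List.range_succ, List.range_succ]
  simp [upa, imp]

theorem postAttr_prunedDS (n : ℕ) :
    postAttr LTA upa 1 (prunedDS n) =
      ((fullDS n).convs.map fun c => Finsupp.single (imp (2 * c.id), c) 1).sum := by
  refine postAttr_LTA_of_nodup upa (fun c => imp (2 * c.id)) le_rfl ?_ ?_
  · intro c hc
    obtain ⟨k, hk, rfl⟩ := List.mem_map.1 hc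
    exact ⟨_, eligible_prunedDS (List.mem_range.1 hk)⟩
  · simp only [prunedDS, fullDS, List.map_map]
    refine List.nodup_range.map fun j k h => ?_
    simpa [upa, imp, conv] using h

theorem postAttr_fullDS {n : ℕ} (hn : 0 < n) :
    postAttr LTA upa 1 (fullDS n) = Finsupp.single (imp 1, conv 0) 1 := by
  obtain ⟨n, rfl⟩ : ∃ m, n = m + 1 := ⟨n - 1, by omega⟩
  refine postAttr_LTA_of_scope_eq upa (fun c => imp (2 * c.id + 1)) le_rfl one_lt_two
    (D := fullDS (n + 1)) ?_ (by rw [fullDS, List.range_succ_eq_map, List.map_cons]) ?_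
  · intro c hc
    obtain ⟨k, hk, rfl⟩ := List.mem_map.1 hc
    rw [eligible_fullDS (List.mem_range.1 hk), List.range_succ, List.map_append]
    exact ⟨_, rfl⟩
  · intro c _
    simp [upa, imp]

end LTAPostAttrUPA

open LTAPostAttrUPA in
/-- Theorem 5.3: for last-touch attribution, the user × publisher × advertiser adjacency
relation with post-attribution enforcement is invalid: with bound `r = 1`, for every
`p > 1` there are adjacent datasets (differing by all impressions of one
(user, publisher, advertiser) triple) whose attributed datasets are at ℓ₁-distance at
least `p - 1`. -/
theorem post_attr_upa_lta_invalid (p : ℕ) (hp : 1 < p) :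
    ∃ (D D' : Dataset) (v : ℕ × ℕ × ℕ),
      RemovesScope (fun i => (i.user, i.pub, i.adv)) (fun _ => none) v D D' ∧
      SortedDS D' ∧
      (p : ℝ) - 1 ≤ l1dist (postAttr LTA (fun i => (i.user, i.pub, i.adv)) 1 D)
        (postAttr LTA (fun i => (i.user, i.pub, i.adv)) 1 D') := by
  refine ⟨prunedDS (p - 1), fullDS (p - 1), (0, 0, 0), removesScope_prunedDS _,
    sortedDS_fullDS _, ?_⟩
  have hconvs : (fullDS (p - 1)).convs.Nodup :=
    List.nodup_range.map fun _ _ h => congrArg Conversion.id h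
  rw [show (fun i : Impression => (i.user, i.pub, i.adv)) = upa from rfl, postAttr_prunedDS,
    postAttr_fullDS (by omega)]
  calc (p : ℝ) - 1 = ((fullDS (p - 1)).convs.length : ℝ) := by simp [fullDS, Nat.cast_sub hp.le]
    _ ≤ _ := length_le_l1dist_sum_single hconvs _ fun c _ h => by
        simp only [Prod.mk.injEq, imp, Impression.mk.injEq] at h
        omega
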